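/- Let C, X, Y be finite nonempty types and let p be a probability mass function on C × X × Y. Fix x ∈ X and y ∈ Y, and assume p(X = x, C = c) > 0 for every c ∈ C. Then the back-door adjusted causal effect satisfies the Tian–Pearl bounds: p(X = x, Y = y) ≤ Σ_c p(X = x, Y = y, C = c) · p(C = c) / p(X = x, C = c) ≤ 1 − (p(X = x) − p(X = x, Y = y)). -/

import Mathlib

/-!
For each stratum `c` write `a = p(x,y,c) ≤ b = p(x,c) ≤ d = p(c)`. The adjusted term `a d / b`
lies between `a` and `d - b + a`: the lower bound because `d / b ≥ 1`, the upper bound because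
`(b - a)(d - b) ≥ 0`. Summing over `c` gives `p(x,y)` below and `1 - p(x) + p(x,y)` above.
-/

open Finset

/-- `p(X = x, Y = y, C = c)`: probability of the singleton `(c, x, y)`. -/
def pXYC {C X Y : Type*} (p : C × X × Y → ℝ) (x : X) (y : Y) (c : C) : ℝ :=
  p (c, x, y)

/-- `p(X = x, C = c)`: marginal over `Y`. -/
noncomputable def pXC {C X Y : Type*} [Fintype Y] (p : C × X × Y → ℝ) (x : X) (c : C) : ℝ :=
  ∑ y' : Y, p (c, x, y')

/-- `p(X = x, Y = y)`: marginal over `C`. -/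
noncomputable def pXY {C X Y : Type*} [Fintype C] (p : C × X × Y → ℝ) (x : X) (y : Y) : ℝ :=
  ∑ c : C, p (c, x, y)

/-- `p(X = x)`: marginal over `C` and `Y`. -/
noncomputable def pX {C X Y : Type*} [Fintype C] [Fintype Y] (p : C × X × Y → ℝ) (x : X) : ℝ :=
  ∑ c : C, ∑ y' : Y, p (c, x, y')

/-- `p(C = c)`: marginal over `X` and `Y`. -/
noncomputable def pC {C X Y : Type*} [Fintype X] [Fintype Y] (p : C × X × Y → ℝ) (c : C) : ℝ :=
  ∑ x' : X, ∑ y' : Y, p (c, x', y')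

theorem le_mul_div_of_le {K : Type*} [Field K] [LinearOrder K] [IsStrictOrderedRing K]
    {a b d : K} (ha : 0 ≤ a) (hb : 0 < b) (hbd : b ≤ d) :
    a ≤ a * d / b := by
  rw [mul_div_assoc]
  exact le_mul_of_one_le_right ha ((one_le_div hb).2 hbd)

theorem mul_div_le_sub_add {K : Type*} [Field K] [LinearOrder K] [IsStrictOrderedRing K]
    {a b d : K} (hab : a ≤ b) (hbd : b ≤ d) (hb : 0 < b) :
    a * d / b ≤ d - b + a := by
  rw [div_le_iff₀ hb]
  nlinarith [mul_nonneg (sub_nonneg.2 hab) (sub_nonneg.2 hbd)]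

section Marginals

variable {C X Y : Type*} (p : C × X × Y → ℝ)

theorem pXYC_le_pXC [Fintype Y] (hp : ∀ z, 0 ≤ p z) (x : X) (y : Y) (c : C) :
    pXYC p x y c ≤ pXC p x c :=
  single_le_sum (f := fun y' => p (c, x, y')) (fun _ _ => hp _) (mem_univ y)

theorem pXC_le_pC [Fintype X] [Fintype Y] (hp : ∀ z, 0 ≤ p z) (x : X) (c : C) :
    pXC p x c ≤ pC p c :=
  single_le_sum (f := fun x' => pXC p x' c) (fun _ _ => sum_nonneg fun _ _ => hp _) (mem_univ x)

theorem sum_pC [Fintype C] [Fintype X] [Fintype Y] :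
    ∑ c : C, pC p c = ∑ z : C × X × Y, p z := by
  simp only [pC, Fintype.sum_prod_type]

end Marginals

theorem backdoor_satisfies_tian_pearl_bounds_general
    {C X Y : Type*} [Fintype C] [Fintype X] [Fintype Y]
    (p : C × X × Y → ℝ) (hp : ∀ z, 0 ≤ p z) (hsum : ∑ z : C × X × Y, p z = 1)
    (x : X) (y : Y)
    (hpos : ∀ c : C, 0 < pXC p x c) :
    pXY p x y ≤ (∑ c : C, pXYC p x y c * pC p c / pXC p x c) ∧
    (∑ c : C, pXYC p x y c * pC p c / pXC p x c) ≤ 1 - (pX p x - pXY p x y) := by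
  constructor
  · exact sum_le_sum fun c _ => le_mul_div_of_le (hp _) (hpos c) (pXC_le_pC p hp x c)
  · calc (∑ c : C, pXYC p x y c * pC p c / pXC p x c)
        ≤ ∑ c : C, (pC p c - pXC p x c + pXYC p x y c) :=
          sum_le_sum fun c _ =>
            mul_div_le_sub_add (pXYC_le_pXC p hp x y c) (pXC_le_pC p hp x c) (hpos c)
      _ = 1 - (pX p x - pXY p x y) := by
          rw [sum_add_distrib, sum_sub_distrib, sum_pC, hsum]
          simp only [pX, pXY, pXC, pXYC]
          ring

theorem backdoor_satisfies_tian_pearl_bounds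
    {C X Y : Type*} [Fintype C] [Fintype X] [Fintype Y]
    [Nonempty C] [Nonempty X] [Nonempty Y]
    (p : C × X × Y → ℝ) (hp : ∀ z, 0 ≤ p z) (hsum : ∑ z : C × X × Y, p z = 1)
    (x : X) (y : Y)
    (hpos : ∀ c : C, 0 < pXC p x c) :
    pXY p x y ≤ (∑ c : C, pXYC p x y c * pC p c / pXC p x c) ∧
    (∑ c : C, pXYC p x y c * pC p c / pXC p x c) ≤ 1 - (pX p x - pXY p x y) :=
  backdoor_satisfies_tian_pearl_bounds_general p hp hsum x y hpos
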